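/- Let (N_k)_{k≥1} be a nondecreasing sequence of positive integers with N_k → ∞, let 0 < λ < 1/2, set ρ_k = λ^k and a = 1 − Σ_{k≥1} λ^k ∈ (0,1), and let (ε_k)_{k≥1} be a strictly decreasing sequence of positive reals converging to zero. Then there exist sets (A_k)_{k≥1} ⊆ 𝒞 such that: (i) the A_k are pairwise disjoint; (ii) a·ρ_k ≤ μ(A_k) ≤ ρ_k for all k; and (iii) for all k ≥ 1 and all i, j ∈ {0, …, N_k}, μ(T^{-i}A_k Δ T^{-j}A_k) ≤ ε_k. -/

import Mathlib

/-!
Ergodicity and the non-atomicity of `𝒞` give, for every height `g`, a Rokhlin tower with base in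
`𝒞`. Taking all `g` levels over a part of the base of measure `c / g` produces a set `E ∈ 𝒞` of
measure exactly `c` with `μ (E ∆ T⁻¹ E) ≤ 2 / g`. Choose such sets `E k` of measure `λ^(k+1)`, so
invariant that all `E j` with `j ≥ k` together move by at most `ε k` under the shifts up to `N k`,
and put `A k := E k \ ⋃_{j > k} E j`. These sets are disjoint and still almost invariant, and
removing the later sets costs at most `∑_{j > k} λ^(j+1) = (1 - a) λ^(k+1)`, which is exactly
the room left by the lower bound `a λ^(k+1)`.
-/

open MeasureTheory Filter Set Function
open scoped Topology ENNReal symmDiff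

namespace MeasureTheory.Measure

variable {α : Type*} {m : MeasurableSpace α}

def Atomless (ν : Measure α) : Prop :=
  ∀ s, MeasurableSet s → 0 < ν s → ∃ t ⊆ s, MeasurableSet t ∧ 0 < ν t ∧ ν t < ν s

lemma atomless_trim {m0 : MeasurableSpace α} {μ : Measure[m0] α} (hm : m ≤ m0)
    (h : ∀ s, MeasurableSet[m] s → 0 < μ s →
      ∃ t, MeasurableSet[m] t ∧ t ⊆ s ∧ 0 < μ t ∧ μ t < μ s) :
    (μ.trim hm).Atomless := fun s hs hs0 => by
  rw [trim_measurableSet_eq hm hs] at hs0 ⊢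
  obtain ⟨t, ht, hts, ht0, hts'⟩ := h s hs hs0
  exact ⟨t, hts, ht, by rwa [trim_measurableSet_eq hm ht], by rwa [trim_measurableSet_eq hm ht]⟩

lemma exists_subset_measure_le_forall_le_two_mul {ν : Measure α} {s : Set α} (hs : ν s ≠ ∞)
    (b : ℝ≥0∞) : ∃ t ⊆ s, MeasurableSet t ∧ ν t ≤ b ∧
      ∀ t' ⊆ s, MeasurableSet t' → ν t' ≤ b → ν t' ≤ 2 * ν t := by
  set S := ⨆ (t' : Set α) (_ : t' ⊆ s ∧ MeasurableSet t' ∧ ν t' ≤ b), ν t'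
  have hle_S : ∀ t' ⊆ s, MeasurableSet t' → ν t' ≤ b → ν t' ≤ S :=
    fun t' ht' ht'm ht'b => le_iSup₂ (f := fun t' (_ : _ ∧ _) => ν t') t' ⟨ht', ht'm, ht'b⟩
  by_cases hS : S = 0
  · refine ⟨∅, empty_subset _, .empty, by simp, fun t' ht' ht'm ht'b => ?_⟩
    simpa [hS] using hle_S t' ht' ht'm ht'b
  have hS_top : S ≠ ∞ := ne_top_of_le_ne_top hs (iSup₂_le fun t' ht' => measure_mono ht'.1)
  obtain ⟨t, ht⟩ := lt_iSup_iff.1 (ENNReal.half_lt_self hS hS_top)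
  obtain ⟨⟨hts, htm, htb⟩, hlt⟩ := lt_iSup_iff.1 ht
  refine ⟨t, hts, htm, htb, fun t' ht' ht'm ht'b => ?_⟩
  calc ν t' ≤ S := hle_S t' ht' ht'm ht'b
    _ = 2 * (S / 2) := (ENNReal.mul_div_cancel two_ne_zero ENNReal.ofNat_ne_top).symm
    _ ≤ 2 * ν t := by gcongr

namespace Atomless

variable {ν : Measure α} {s : Set α}

lemma exists_subset_two_mul_measure_le (hν : ν.Atomless) (hs : MeasurableSet s) (h : 0 < ν s) :
    ∃ t ⊆ s, MeasurableSet t ∧ 0 < ν t ∧ 2 * ν t ≤ ν s := by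
  obtain ⟨u, hus, hu, hu0, hus'⟩ := hν s hs h
  have hsum : ν u + ν (s \ u) = ν s := by
    rw [measure_add_sdiff hu.nullMeasurableSet, union_eq_self_of_subset_left hus]
  have hdiff0 : 0 < ν (s \ u) := by
    refine pos_iff_ne_zero.2 fun h0 => hus'.ne ?_
    rw [← hsum, h0, add_zero]
  rcases le_total (ν u) (ν (s \ u)) with hle | hle
  · exact ⟨u, hus, hu, hu0, by rw [two_mul, ← hsum]; gcongr⟩
  · exact ⟨s \ u, sdiff_subset, hs.diff hu, hdiff0, by rw [two_mul, ← hsum, add_comm]; gcongr⟩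

lemma exists_subset_measure_pos_le [IsFiniteMeasure ν] (hν : ν.Atomless) (hs : MeasurableSet s)
    (h : 0 < ν s) {ε : ℝ≥0∞} (hε : 0 < ε) : ∃ t ⊆ s, MeasurableSet t ∧ 0 < ν t ∧ ν t ≤ ε := by
  have halving : ∀ n : ℕ, ∃ t ⊆ s, MeasurableSet t ∧ 0 < ν t ∧ 2 ^ n * ν t ≤ ν s := by
    intro n
    induction n with
    | zero => exact ⟨s, subset_rfl, hs, h, by simp⟩
    | succ n ih =>
      obtain ⟨t, hts, ht, ht0, hle⟩ := ih
      obtain ⟨t', ht't, ht', ht'0, hle'⟩ := hν.exists_subset_two_mul_measure_le ht ht0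
      refine ⟨t', ht't.trans hts, ht', ht'0, ?_⟩
      calc 2 ^ (n + 1) * ν t' = 2 ^ n * (2 * ν t') := by ring
        _ ≤ 2 ^ n * ν t := by gcongr
        _ ≤ ν s := hle
  obtain ⟨n, hn⟩ := ENNReal.exists_nat_mul_gt hε.ne' (measure_ne_top ν s)
  obtain ⟨t, hts, ht, ht0, hle⟩ := halving n
  refine ⟨t, hts, ht, ht0, (ENNReal.mul_le_mul_iff_right (pow_ne_zero n two_ne_zero)
    (ENNReal.pow_ne_top (n := n) ENNReal.ofNat_ne_top)).1 ?_⟩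
  calc 2 ^ n * ν t ≤ ν s := hle
    _ ≤ n * ε := hn.le
    _ ≤ 2 ^ n * ε := by gcongr; exact_mod_cast Nat.lt_two_pow_self.le

theorem exists_subset_measure_eq [IsFiniteMeasure ν] (hν : ν.Atomless) (hs : MeasurableSet s)
    {c : ℝ≥0∞} (hc : c ≤ ν s) : ∃ t ⊆ s, MeasurableSet t ∧ ν t = c := by
  choose G hGs hGm hGc hGmax using fun F : Set α =>
    exists_subset_measure_le_forall_le_two_mul (s := s \ F) (measure_ne_top ν _) (c - ν F)
  -- greedily add to `F n` an almost largest piece of `s \ F n` keeping the measure below `c`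
  let F : ℕ → Set α := fun n => Nat.rec ∅ (fun _ F => F ∪ G F) n
  have hμF_succ : ∀ n, ν (F (n + 1)) = ν (F n) + ν (G (F n)) := fun n =>
    measure_union (disjoint_sdiff_right.mono_right (hGs _)) (hGm _)
  have hF : ∀ n, F n ⊆ s ∧ MeasurableSet (F n) ∧ ν (F n) ≤ c := by
    intro n
    induction n with
    | zero => exact ⟨empty_subset _, .empty, by simp [F]⟩
    | succ n ih =>
      refine ⟨union_subset ih.1 ((hGs _).trans sdiff_subset), ih.2.1.union (hGm _), ?_⟩
      rw [hμF_succ]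
      calc ν (F n) + ν (G (F n)) ≤ ν (F n) + (c - ν (F n)) := by gcongr; exact hGc _
        _ = c := add_tsub_cancel_of_le ih.2.2
  have hmono : Monotone F := monotone_nat_of_le_succ fun n => subset_union_left
  set F' := ⋃ n, F n
  have hF'c : ν F' ≤ c := by
    rw [hmono.measure_iUnion]
    exact iSup_le fun n => (hF n).2.2
  refine ⟨F', iUnion_subset fun n => (hF n).1, .iUnion fun n => (hF n).2.1, ?_⟩
  refine le_antisymm hF'c (not_lt.1 fun hlt => ?_)
  -- a small piece `G'` of what is left was admissible at every step, so each step added `ν G' / 2`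
  have hrest : 0 < ν (s \ F') :=
    (tsub_pos_of_lt hlt).trans_le ((tsub_le_tsub_right hc _).trans le_measure_sdiff)
  obtain ⟨G', hG's, hG'm, hG'0, hG'c⟩ := hν.exists_subset_measure_pos_le
    (hs.diff (.iUnion fun n => (hF n).2.1)) hrest (tsub_pos_of_lt hlt)
  have hgrow : ∀ n : ℕ, n * (ν G' / 2) ≤ ν (F n) := by
    intro n
    induction n with
    | zero => simp
    | succ n ih =>
      have hFn : F n ⊆ F' := subset_iUnion F n
      have hpick : ν G' ≤ 2 * ν (G (F n)) :=
        hGmax _ G' (hG's.trans (sdiff_subset_sdiff_right hFn)) hG'm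
          (hG'c.trans (tsub_le_tsub_left (measure_mono hFn) c))
      rw [hμF_succ, Nat.cast_succ, add_mul, one_mul]
      gcongr
      exact ENNReal.div_le_of_le_mul' hpick
  obtain ⟨n, hn⟩ := ENNReal.exists_nat_mul_gt
    (ENNReal.div_pos hG'0.ne' (ENNReal.ofNat_ne_top (n := 2))).ne'
    (ne_top_of_le_ne_top (measure_ne_top ν s) hc)
  exact (hn.trans_le (hgrow n)).not_ge (hF n).2.2

end Atomless

end MeasureTheory.Measure

section Tower

variable {α : Type*} {f : α → α} {B : Set α} {g : ℕ}

def towerBase (f : α → α) (B : Set α) (g : ℕ) : Set α :=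
  {x | ∃ q, 0 < q ∧ f^[q * g] x ∈ B ∧ ∀ m < q * g, f^[m] x ∉ B}

lemma iterate_notMem_towerBase {x : α} (hx : x ∈ towerBase f B g) {d : ℕ} (hd0 : 0 < d)
    (hdg : d < g) : f^[d] x ∉ towerBase f B g := by
  -- the first visits of `x` and of `f^[d] x` to `B` would be multiples of `g` differing by `d`
  rintro ⟨q', hq', hq'B, hq'min⟩
  obtain ⟨q, hq, hqB, hqmin⟩ := hx
  have hvisit : q * g ≤ q' * g + d := by
    by_contra! h
    exact hqmin _ h (by rwa [iterate_add_apply])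
  have hdq : d ≤ q * g := hdg.le.trans (Nat.le_mul_of_pos_left g hq)
  have hvisit' : q' * g ≤ q * g - d := by
    by_contra! h
    exact hq'min _ h (by rwa [← iterate_add_apply, Nat.sub_add_cancel hdq])
  rcases le_or_gt q q' with h | h
  · have := Nat.mul_le_mul_right g h
    omega
  · have := Nat.mul_le_mul_right g (Nat.succ_le_of_lt h)
    rw [Nat.succ_mul] at this
    omega

lemma exists_iterate_mem_or_mem_towerBase {x : α} (hg : 0 < g) (hx : ∃ m, f^[m] x ∈ B) :
    (∃ m < g, f^[m] x ∈ B) ∨ ∃ i < g, f^[i] x ∈ towerBase f B g := by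
  classical
  refine or_iff_not_imp_left.2 fun hlate => ⟨Nat.find hx % g, Nat.mod_lt _ hg, ?_⟩
  have hgm : g ≤ Nat.find hx := by
    by_contra! h
    exact hlate ⟨_, h, Nat.find_spec hx⟩
  have hdiv := Nat.div_add_mod' (Nat.find hx) g
  refine ⟨Nat.find hx / g, Nat.div_pos hgm hg, ?_, fun m hm hmB => ?_⟩
  · rw [← iterate_add_apply, hdiv]
    exact Nat.find_spec hx
  · rw [← iterate_add_apply] at hmB
    exact Nat.find_min hx (by omega) hmB

lemma measurableSet_towerBase {m : MeasurableSpace α} (hf : Measurable f) (hB : MeasurableSet B) :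
    MeasurableSet (towerBase f B g) := by
  have : towerBase f B g =
      ⋃ q, ⋃ (_ : 0 < q), f^[q * g] ⁻¹' B ∩ ⋂ m, ⋂ (_ : m < q * g), (f^[m] ⁻¹' B)ᶜ := by
    ext x
    simp only [towerBase, mem_ofPred_eq, mem_iUnion, mem_inter_iff, mem_iInter, mem_preimage,
      mem_compl_iff, exists_prop]
  rw [this]
  exact .iUnion fun q => .iUnion fun _ =>
    (hf.iterate _ hB).inter (.iInter fun m => .iInter fun _ => (hf.iterate m hB).compl)

lemma symmDiff_biUnion_preimage_iterate_subset (f : α → α) (M : Set α) (g : ℕ) :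
    (⋃ i ∈ Finset.range g, f^[i] ⁻¹' M) ∆ (f ⁻¹' ⋃ i ∈ Finset.range g, f^[i] ⁻¹' M) ⊆
      M ∪ f^[g] ⁻¹' M := by
  intro x hx
  simp only [mem_symmDiff, mem_iUnion, mem_preimage, Finset.mem_range, ← iterate_succ_apply,
    not_exists] at hx
  rcases hx with ⟨⟨i, hi, hxi⟩, hnot⟩ | ⟨⟨i, hi, hxi⟩, hnot⟩
  · rcases i with _ | i
    · exact Or.inl hxi
    · exact absurd hxi (hnot i (by omega))
  · by_cases hig : i + 1 < g
    · exact absurd hxi (hnot _ hig)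
    · exact Or.inr (by rwa [show g = i + 1 by omega])

end Tower

section MeasureTower

variable {α : Type*} {m : MeasurableSpace α} {μ : Measure α} {f : α → α} {B M : Set α} {g : ℕ}

lemma measure_biUnion_preimage_iterate (hf : MeasurePreserving f μ μ) (hM : MeasurableSet M)
    (hgap : ∀ x ∈ M, ∀ d, 0 < d → d < g → f^[d] x ∉ M) :
    μ (⋃ i ∈ Finset.range g, f^[i] ⁻¹' M) = g * μ M := by
  have hdisj : (↑(Finset.range g) : Set ℕ).PairwiseDisjoint (fun i => f^[i] ⁻¹' M) := by
    intro i hi j hj hij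
    simp only [Finset.coe_range, mem_Iio] at hi hj
    wlog hlt : i < j generalizing i j
    · exact (this hij.symm hj hi (hij.lt_or_gt.resolve_left hlt)).symm
    refine disjoint_left.2 fun x hxi hxj => hgap _ hxi (j - i) (by omega) (by omega) ?_
    rwa [← iterate_add_apply, Nat.sub_add_cancel hlt.le]
  rw [measure_biUnion_finset hdisj fun i _ => hf.measurable.iterate i hM]
  simp [(hf.iterate _).measure_preimage hM.nullMeasurableSet]

lemma measure_symmDiff_biUnion_preimage_iterate_le (hf : MeasurePreserving f μ μ)
    (hM : MeasurableSet M) (g : ℕ) :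
    μ ((⋃ i ∈ Finset.range g, f^[i] ⁻¹' M) ∆ (f ⁻¹' ⋃ i ∈ Finset.range g, f^[i] ⁻¹' M)) ≤
      2 * μ M := by
  calc _ ≤ μ (M ∪ f^[g] ⁻¹' M) := measure_mono (symmDiff_biUnion_preimage_iterate_subset f M g)
    _ ≤ μ M + μ (f^[g] ⁻¹' M) := measure_union_le _ _
    _ = 2 * μ M := by rw [(hf.iterate g).measure_preimage hM.nullMeasurableSet, two_mul]

lemma one_le_mul_measure_towerBase_add [IsProbabilityMeasure μ] (hf : MeasurePreserving f μ μ)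
    (hB : MeasurableSet B) (hg : 0 < g) (hhit : ∀ᵐ x ∂μ, ∃ m, f^[m] x ∈ B) :
    1 ≤ g * μ (towerBase f B g) + g * μ B := by
  have hM := measurableSet_towerBase (g := g) hf.measurable hB
  calc (1 : ℝ≥0∞) = μ univ := measure_univ.symm
    _ ≤ μ ((⋃ i ∈ Finset.range g, f^[i] ⁻¹' towerBase f B g) ∪ ⋃ m ∈ Finset.range g, f^[m] ⁻¹' B) :=
        measure_mono_ae <| hhit.mono fun x hx _ => by
          show x ∈ (_ : Set α)
          simpa [or_comm] using exists_iterate_mem_or_mem_towerBase hg hx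
    _ ≤ ∑ i ∈ Finset.range g, μ (f^[i] ⁻¹' towerBase f B g) +
          ∑ m ∈ Finset.range g, μ (f^[m] ⁻¹' B) :=
        (measure_union_le _ _).trans (add_le_add (measure_biUnion_finset_le _ _)
          (measure_biUnion_finset_le _ _))
    _ = g * μ (towerBase f B g) + g * μ B := by
        simp [(hf.iterate _).measure_preimage hM.nullMeasurableSet,
          (hf.iterate _).measure_preimage hB.nullMeasurableSet]

end MeasureTower

section Ergodic

variable {α : Type*} {m0 : MeasurableSpace α} {μ : Measure α} {f : α → α} {B : Set α}

lemma ergodic_of_measure_eq_zero_or_one [IsProbabilityMeasure μ] (hf : MeasurePreserving f μ μ)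
    (h : ∀ s, MeasurableSet s → f ⁻¹' s = s → μ s = 0 ∨ μ s = 1) : Ergodic f μ :=
  ⟨hf, ⟨fun s hs hfs => eventuallyConst_set'.2 <| (h s hs hfs).imp ae_eq_empty.2
    fun h1 => (ae_eq_univ_iff_measure_eq hs.nullMeasurableSet).2 (by rw [h1, measure_univ])⟩⟩

lemma Ergodic.ae_exists_iterate_mem [IsFiniteMeasure μ] (hf : Ergodic f μ)
    (hB : MeasurableSet B) (hB0 : μ B ≠ 0) : ∀ᵐ x ∂μ, ∃ m, f^[m] x ∈ B := by
  have hW : MeasurableSet (⋃ m, f^[m] ⁻¹' B) := .iUnion fun m => hf.measurable.iterate m hB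
  have hfW : f ⁻¹' (⋃ m, f^[m] ⁻¹' B) ⊆ ⋃ m, f^[m] ⁻¹' B := by
    intro x hx
    obtain ⟨m, hm⟩ := mem_iUnion.1 hx
    exact mem_iUnion.2 ⟨m + 1, by rwa [mem_preimage, iterate_succ_apply]⟩
  rcases hf.ae_empty_or_univ_of_preimage_ae_le hW.nullMeasurableSet hfW.eventuallyLE with h | h
  · exact absurd (measure_mono_null (subset_iUnion (fun m => f^[m] ⁻¹' B) 0) (ae_eq_empty.1 h))
      hB0
  · exact h.mono fun x hx => mem_iUnion.1 (cast hx.symm (mem_univ x))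

lemma Ergodic.div_le_measure_towerBase [IsProbabilityMeasure μ] (hf : Ergodic f μ)
    (hB : MeasurableSet B) (hB0 : μ B ≠ 0) {g : ℕ} (hg : g ≠ 0) {c : ℝ≥0∞} (hc : c ≤ 1)
    (hBc : μ B ≤ (1 - c) / g) : c / g ≤ μ (towerBase f B g) := by
  have hcover := one_le_mul_measure_towerBase_add hf.toMeasurePreserving hB
    (Nat.pos_of_ne_zero hg) (hf.ae_exists_iterate_mem hB hB0)
  have hgB : (g : ℝ≥0∞) * μ B ≤ 1 - c :=
    calc (g : ℝ≥0∞) * μ B ≤ g * ((1 - c) / g) := by gcongr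
      _ = 1 - c := ENNReal.mul_div_cancel (by simpa) (ENNReal.natCast_ne_top g)
  refine ENNReal.div_le_of_le_mul' ?_
  calc c = 1 - (1 - c) := (ENNReal.sub_sub_cancel ENNReal.one_ne_top hc).symm
    _ ≤ g * μ (towerBase f B g) := tsub_le_iff_right.2 (hcover.trans (by gcongr))

theorem Ergodic.exists_measure_eq_measure_symmDiff_preimage_le [IsProbabilityMeasure μ]
    (hf : Ergodic f μ) {C : MeasurableSpace α} (hC : C ≤ m0) (hfC : Measurable[C, C] f)
    (hatom : (μ.trim hC).Atomless) {c δ : ℝ≥0∞} (hc : c < 1) (hδ : δ ≠ 0) :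
    ∃ E, MeasurableSet[C] E ∧ μ E = c ∧ μ (E ∆ (f ⁻¹' E)) ≤ δ := by
  obtain ⟨g, hg⟩ := ENNReal.exists_inv_nat_lt
    (ENNReal.div_pos hδ (ENNReal.ofNat_ne_top (n := 2))).ne'
  have hg0 : g ≠ 0 := by
    rintro rfl
    simp at hg
  obtain ⟨B, -, hBC, hB0, hBle⟩ := hatom.exists_subset_measure_pos_le MeasurableSet.univ
    (by simp [trim_measurableSet_eq])
    (ENNReal.div_pos (tsub_pos_of_lt hc).ne' (ENNReal.natCast_ne_top g))
  rw [trim_measurableSet_eq hC hBC] at hB0 hBle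
  have hMC : MeasurableSet[C] (towerBase f B g) := measurableSet_towerBase hfC hBC
  have hcM : c / g ≤ μ (towerBase f B g) :=
    hf.div_le_measure_towerBase (hC _ hBC) hB0.ne' hg0 hc.le hBle
  obtain ⟨H, hHM, hHC, hH⟩ := hatom.exists_subset_measure_eq hMC (c := c / g)
    (by rwa [trim_measurableSet_eq hC hMC])
  rw [trim_measurableSet_eq hC hHC] at hH
  have hgapH : ∀ x ∈ H, ∀ d, 0 < d → d < g → f^[d] x ∉ H := fun x hx d hd hdg hdx =>
    iterate_notMem_towerBase (hHM hx) hd hdg (hHM hdx)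
  refine ⟨⋃ i ∈ Finset.range g, f^[i] ⁻¹' H,
    .biUnion (Finset.range g).countable_toSet fun i _ => hfC.iterate i hHC, ?_, ?_⟩
  · rw [measure_biUnion_preimage_iterate hf.toMeasurePreserving (hC _ hHC) hgapH, hH,
      ENNReal.mul_div_cancel (by simpa) (ENNReal.natCast_ne_top g)]
  · calc _ ≤ 2 * μ H :=
          measure_symmDiff_biUnion_preimage_iterate_le hf.toMeasurePreserving (hC _ hHC) g
      _ ≤ 2 * (g : ℝ≥0∞)⁻¹ := by
          rw [hH, div_eq_mul_inv]
          gcongr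
          exact mul_le_of_le_one_left' hc.le
      _ ≤ 2 * (δ / 2) := by gcongr
      _ = δ := ENNReal.mul_div_cancel two_ne_zero ENNReal.ofNat_ne_top

end Ergodic

lemma tsum_pow_succ_le_one {r : ℝ} (h0 : 0 ≤ r) (h : r ≤ 1 / 2) : ∑' i : ℕ, r ^ (i + 1) ≤ 1 := by
  simp_rw [pow_succ', tsum_mul_left, tsum_geometric_of_lt_one h0 (by linarith)]
  rw [← div_eq_mul_inv, div_le_one (by linarith)]
  linarith

lemma ENNReal.tsum_inv_two_pow_succ : ∑' m : ℕ, (2⁻¹ : ℝ≥0∞) ^ (m + 1) = 1 := by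
  rw [ENNReal.tsum_geometric_add_one, ENNReal.one_sub_inv_two, inv_inv,
    ENNReal.inv_mul_cancel two_ne_zero ENNReal.ofNat_ne_top]

lemma exists_ne_zero_mul_le_geometric (N : ℕ → ℕ) {ε : ℕ → ℝ≥0∞} (hε : ∀ k, ε k ≠ 0) :
    ∃ δ : ℕ → ℝ≥0∞, (∀ j, δ j ≠ 0) ∧ ∀ k m, N k * δ (k + m) ≤ ε k * 2⁻¹ ^ (m + 1) := by
  refine ⟨fun j => 2⁻¹ ^ (j + 1) * (Finset.range (j + 1)).inf fun k => ε k / N k,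
    fun j => mul_ne_zero (by simp) (pos_iff_ne_zero.1 ((Finset.lt_inf_iff (by simp)).2
      fun k _ => ENNReal.div_pos (hε k) (ENNReal.natCast_ne_top _))), fun k m => ?_⟩
  have hpow : (2⁻¹ : ℝ≥0∞) ^ (k + m + 1) ≤ 2⁻¹ ^ (m + 1) :=
    pow_le_pow_of_le_one bot_le (ENNReal.inv_le_one.2 one_le_two) (by omega)
  have hinf : ((Finset.range (k + m + 1)).inf fun k => ε k / N k) ≤ ε k / N k :=
    Finset.inf_le (Finset.mem_range.2 (by omega))
  calc N k * (2⁻¹ ^ (k + m + 1) * _) ≤ N k * (2⁻¹ ^ (m + 1) * (ε k / N k)) := by gcongr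
    _ ≤ ε k * 2⁻¹ ^ (m + 1) := by
        rw [mul_left_comm, mul_comm (ε k)]
        gcongr
        exact ENNReal.mul_div_le

section LaterSdiff

variable {α β : Type*} (E : ℕ → Set α)

lemma pairwise_disjoint_sdiff_iUnion_add :
    Pairwise (Disjoint on fun k => E k \ ⋃ i, E (k + i + 1)) := by
  refine (pairwise_disjoint_on _).2 fun k l hkl => disjoint_left.2 fun x hxk hxl => hxk.2 ?_
  exact mem_iUnion.2 ⟨l - k - 1, by rw [show k + (l - k - 1) + 1 = l by omega]; exact hxl.1⟩

lemma preimage_symmDiff_sdiff_iUnion_add_subset (φ ψ : β → α) (k : ℕ) :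
    (φ ⁻¹' (E k \ ⋃ i, E (k + i + 1))) ∆ (ψ ⁻¹' (E k \ ⋃ i, E (k + i + 1))) ⊆
      ⋃ i, (φ ⁻¹' E (k + i)) ∆ (ψ ⁻¹' E (k + i)) := by
  intro x hx
  simp only [mem_symmDiff, mem_preimage, Set.mem_sdiff, mem_iUnion, not_exists] at hx ⊢
  rcases hx with ⟨⟨hφ, hφ'⟩, hψ⟩ | ⟨⟨hψ, hψ'⟩, hφ⟩
  · by_cases hψk : ψ x ∈ E k
    · obtain ⟨i, hi⟩ := not_forall_not.1 (not_and.1 hψ hψk)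
      exact ⟨i + 1, Or.inr ⟨hi, hφ' i⟩⟩
    · exact ⟨0, Or.inl ⟨hφ, hψk⟩⟩
  · by_cases hφk : φ x ∈ E k
    · obtain ⟨i, hi⟩ := not_forall_not.1 (not_and.1 hφ hφk)
      exact ⟨i + 1, Or.inl ⟨hi, hψ' i⟩⟩
    · exact ⟨0, Or.inr ⟨hψ, hφk⟩⟩

variable {m : MeasurableSpace α} (μ : Measure α)

lemma measure_le_measure_sdiff_iUnion_add_tsum (k : ℕ) :
    μ (E k) ≤ μ (E k \ ⋃ i, E (k + i + 1)) + ∑' i, μ (E (k + i + 1)) :=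
  calc μ (E k) ≤ μ ((E k \ ⋃ i, E (k + i + 1)) ∪ ⋃ i, E (k + i + 1)) :=
        measure_mono (by rw [sdiff_union_self]; exact subset_union_left)
    _ ≤ _ := (measure_union_le _ _).trans (add_le_add le_rfl (measure_iUnion_le _))

lemma ofReal_mul_pow_le_measure_sdiff_iUnion {r a : ℝ} (hr0 : 0 ≤ r) (hr : r ≤ 1 / 2)
    (ha : a = 1 - ∑' i : ℕ, r ^ (i + 1)) (hE : ∀ j, μ (E j) = ENNReal.ofReal (r ^ (j + 1)))
    (k : ℕ) : ENNReal.ofReal (a * r ^ (k + 1)) ≤ μ (E k \ ⋃ i, E (k + i + 1)) := by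
  have hsum : Summable fun i : ℕ => r ^ (i + 1) := by
    simpa [pow_succ'] using (summable_geometric_of_lt_one hr0 (by linarith)).mul_left r
  have htail : ∑' i, μ (E (k + i + 1)) = ENNReal.ofReal (r ^ (k + 1) * ∑' i : ℕ, r ^ (i + 1)) := by
    rw [ENNReal.ofReal_mul (by positivity),
      ENNReal.ofReal_tsum_of_nonneg (fun i => by positivity) hsum, ← ENNReal.tsum_mul_left]
    refine tsum_congr fun i => ?_
    rw [hE, ← ENNReal.ofReal_mul (by positivity), ← pow_add]
    congr 2
    omega
  have ha0 : 0 ≤ a := by linarith [tsum_pow_succ_le_one hr0 hr]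
  refine ENNReal.le_of_add_le_add_right (htail ▸ ENNReal.ofReal_ne_top) ?_
  calc ENNReal.ofReal (a * r ^ (k + 1)) + ∑' i, μ (E (k + i + 1)) = μ (E k) := by
        rw [htail, ← ENNReal.ofReal_add (by positivity) (by positivity), hE, ha]
        congr 1
        ring
    _ ≤ _ := measure_le_measure_sdiff_iUnion_add_tsum E μ k

end LaterSdiff

namespace MeasureTheory.MeasurePreserving

variable {α : Type*} {m : MeasurableSpace α} {μ : Measure α} {f : α → α}

lemma measure_symmDiff_preimage_iterate_iterate_le {s : Set α} (hf : MeasurePreserving f μ μ)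
    (hs : NullMeasurableSet s μ) {i j n : ℕ} (hi : i ≤ n) (hj : j ≤ n) :
    μ ((f^[i] ⁻¹' s) ∆ (f^[j] ⁻¹' s)) ≤ n * μ (s ∆ (f ⁻¹' s)) := by
  wlog hij : i ≤ j generalizing i j
  · rw [symmDiff_comm]
    exact this hj hi (le_of_not_ge hij)
  have hshift : (f^[i] ⁻¹' s) ∆ (f^[j] ⁻¹' s) = f^[i] ⁻¹' (s ∆ (f^[j - i] ⁻¹' s)) := by
    rw [preimage_symmDiff, ← preimage_comp, ← iterate_add, Nat.sub_add_cancel hij]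
  rw [hshift, (hf.iterate i).measure_preimage
    (hs.symmDiff (hs.preimage (hf.iterate _).quasiMeasurePreserving))]
  calc _ ≤ (j - i) • μ (s ∆ (f ⁻¹' s)) := hf.measure_symmDiff_preimage_iterate_le hs _
    _ ≤ n * μ (s ∆ (f ⁻¹' s)) := by
        rw [nsmul_eq_mul]
        gcongr
        exact_mod_cast (Nat.sub_le j i).trans hj

lemma measure_symmDiff_preimage_iterate_sdiff_iUnion_le (hf : MeasurePreserving f μ μ)
    {E : ℕ → Set α} (hE : ∀ j, NullMeasurableSet (E j) μ) {k n : ℕ} {ε : ℝ≥0∞}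
    (hEε : ∀ m, n * μ (E (k + m) ∆ (f ⁻¹' E (k + m))) ≤ ε * 2⁻¹ ^ (m + 1)) {i j : ℕ}
    (hi : i ≤ n) (hj : j ≤ n) :
    μ ((f^[i] ⁻¹' (E k \ ⋃ l, E (k + l + 1))) ∆ (f^[j] ⁻¹' (E k \ ⋃ l, E (k + l + 1)))) ≤ ε :=
  calc _ ≤ ∑' m, μ ((f^[i] ⁻¹' E (k + m)) ∆ (f^[j] ⁻¹' E (k + m))) :=
        (measure_mono (preimage_symmDiff_sdiff_iUnion_add_subset E _ _ k)).trans
          (measure_iUnion_le _)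
    _ ≤ ∑' m, ε * 2⁻¹ ^ (m + 1) := ENNReal.tsum_le_tsum fun m =>
        (hf.measure_symmDiff_preimage_iterate_iterate_le (hE _) hi hj).trans (hEε m)
    _ = ε := by rw [ENNReal.tsum_mul_left, ENNReal.tsum_inv_two_pow_succ, mul_one]

end MeasureTheory.MeasurePreserving

theorem exists_quasi_invariant_disjoint_sets_general
    {Ω : Type*} [m0 : MeasurableSpace Ω] (μ : Measure Ω) [IsProbabilityMeasure μ]
    (T : Equiv.Perm Ω)
    (hTmp : MeasurePreserving T μ μ)
    (herg : ∀ A : Set Ω, MeasurableSet A → ⇑T ⁻¹' A = A → μ A = 0 ∨ μ A = 1)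
    (C : MeasurableSpace Ω) (hCle : C ≤ m0)
    (hCT : MeasurableSpace.comap T C = C)
    (hCna : ∀ A : Set Ω, MeasurableSet[C] A → 0 < μ A →
      ∃ B : Set Ω, MeasurableSet[C] B ∧ B ⊆ A ∧ 0 < μ B ∧ μ B < μ A)
    (N : ℕ → ℕ)
    (lam : ℝ) (hlam0 : 0 < lam) (hlam1 : lam < 1 / 2)
    (a : ℝ) (ha : a = 1 - ∑' k : ℕ, lam ^ (k + 1))
    (ε : ℕ → ℝ) (hεpos : ∀ k, 0 < ε k) :
    ∃ A : ℕ → Set Ω,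
      (∀ k, MeasurableSet[C] (A k)) ∧
      Pairwise (Function.onFun Disjoint A) ∧
      (∀ k, ENNReal.ofReal (a * lam ^ (k + 1)) ≤ μ (A k) ∧
        μ (A k) ≤ ENNReal.ofReal (lam ^ (k + 1))) ∧
      (∀ k, ∀ i ≤ N k, ∀ j ≤ N k,
        μ (symmDiff (⇑(T ^ i) ⁻¹' A k) (⇑(T ^ j) ⁻¹' A k)) ≤ ENNReal.ofReal (ε k)) := by
  obtain ⟨δ, hδ0, hδ⟩ :=
    exists_ne_zero_mul_le_geometric N fun k => (ENNReal.ofReal_pos.2 (hεpos k)).ne'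
  choose E hEC hEμ hEδ using fun j =>
    (ergodic_of_measure_eq_zero_or_one hTmp herg).exists_measure_eq_measure_symmDiff_preimage_le
      hCle (measurable_iff_comap_le.2 hCT.le) (Measure.atomless_trim hCle hCna)
      (ENNReal.ofReal_lt_one.2 (pow_lt_one₀ hlam0.le (by linarith) (Nat.add_one_ne_zero j)))
      (hδ0 j)
  refine ⟨fun k => E k \ ⋃ i, E (k + i + 1), fun k => (hEC k).diff (.iUnion fun i => hEC _),
    pairwise_disjoint_sdiff_iUnion_add E, fun k => ⟨?_, ?_⟩, fun k i hi j hj => ?_⟩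
  · exact ofReal_mul_pow_le_measure_sdiff_iUnion E μ hlam0.le hlam1.le ha hEμ k
  · exact (measure_mono sdiff_subset).trans (hEμ k).le
  · rw [Equiv.Perm.coe_pow, Equiv.Perm.coe_pow]
    exact hTmp.measure_symmDiff_preimage_iterate_sdiff_iUnion_le
      (fun j => (hCle _ (hEC j)).nullMeasurableSet)
      (fun m => (mul_le_mul_of_nonneg_left (hEδ _) bot_le).trans (hδ k m)) hi hj

/-- Lemma 2: In an ergodic dynamical system with a `T`-invariant
sub-σ-algebra `𝒞` on which `μ` is non-atomic, given `N_k ↗ ∞`, `0 < λ < 1/2`,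
`ρ_k = λ^k`, `a = 1 - ∑_{k≥1} λ^k`, and `ε_k ↘ 0` strictly decreasing positive, there
are sets `A_k ∈ 𝒞` (indexed here by `k : ℕ`, where index `k` stands for the paper's
`k+1 ≥ 1`) which are pairwise disjoint, satisfy `a·ρ_k ≤ μ(A_k) ≤ ρ_k`, and satisfy
`μ(T^{-i}A_k Δ T^{-j}A_k) ≤ ε_k` for all `0 ≤ i, j ≤ N_k`. -/
theorem exists_quasi_invariant_disjoint_sets
    {Ω : Type*} [m0 : MeasurableSpace Ω] (μ : Measure Ω) [IsProbabilityMeasure μ]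
    (T : Equiv.Perm Ω) (hT : Measurable T) (hTinv : Measurable T.symm)
    (hTmp : MeasurePreserving T μ μ)
    (herg : ∀ A : Set Ω, MeasurableSet A → ⇑T ⁻¹' A = A → μ A = 0 ∨ μ A = 1)
    (C : MeasurableSpace Ω) (hCle : C ≤ m0)
    (hCT : MeasurableSpace.comap T C = C)
    (hCna : ∀ A : Set Ω, MeasurableSet[C] A → 0 < μ A →
      ∃ B : Set Ω, MeasurableSet[C] B ∧ B ⊆ A ∧ 0 < μ B ∧ μ B < μ A)
    (N : ℕ → ℕ) (hNpos : ∀ k, 0 < N k) (hNmono : Monotone N)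
    (hNtop : Tendsto N atTop atTop)
    (lam : ℝ) (hlam0 : 0 < lam) (hlam1 : lam < 1 / 2)
    (a : ℝ) (ha : a = 1 - ∑' k : ℕ, lam ^ (k + 1))
    (ε : ℕ → ℝ) (hεpos : ∀ k, 0 < ε k) (hεanti : StrictAnti ε)
    (hεlim : Tendsto ε atTop (𝓝 0)) :
    ∃ A : ℕ → Set Ω,
      (∀ k, MeasurableSet[C] (A k)) ∧
      Pairwise (Function.onFun Disjoint A) ∧
      (∀ k, ENNReal.ofReal (a * lam ^ (k + 1)) ≤ μ (A k) ∧
        μ (A k) ≤ ENNReal.ofReal (lam ^ (k + 1))) ∧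
      (∀ k, ∀ i ≤ N k, ∀ j ≤ N k,
        μ (symmDiff (⇑(T ^ i) ⁻¹' A k) (⇑(T ^ j) ⁻¹' A k)) ≤ ENNReal.ofReal (ε k)) :=
  exists_quasi_invariant_disjoint_sets_general (m0 := m0) μ T hTmp herg C hCle hCT hCna N lam hlam0
    hlam1 a ha ε hεpos
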